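/- Let n ≥ 3. In VB_n the following identities hold for all m ∈ ℤ and ε ∈ {0,1}: f_{m,0} f_{m,1} = 1; f_{m,ε}³ = 1; and, when n ≥ 4: g_{m,l}² = 1 for all 3 ≤ l ≤ n−1; (f_{m,ε} g_{m,3})³ = 1; (f_{m,ε} g_{m,k})² = 1 for all 4 ≤ k ≤ n−1; (g_{m,i} g_{m,i+1})³ = 1 for all 3 ≤ i ≤ n−2; and (g_{m,i} g_{m,j})² = 1 for all 3 ≤ i < j ≤ n−1 with j > i+1. -/

import Mathlib

/-!
Common setup: the virtual braid group `VB n` and the welded braid group `WB n`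
as presented groups, together with the distinguished elements of their
commutator subgroups used in the paper
"Commutator subgroups of virtual and welded braid groups".

Generators: for `i : Fin (n-1)`, `Sum.inl i` represents σ_{i+1} and
`Sum.inr i` represents ρ_{i+1}.
-/

/-- The generating set of `VB n` (and `WB n`). -/
abbrev VBGen (n : ℕ) := (Fin (n - 1)) ⊕ (Fin (n - 1))

/-- The free group letter σ_i, for `1 ≤ i ≤ n-1` (junk value `1` otherwise). -/
def fσ (n i : ℕ) : FreeGroup (VBGen n) :=
  if h : 1 ≤ i ∧ i - 1 < n - 1 then FreeGroup.of (Sum.inl ⟨i - 1, h.2⟩) else 1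

/-- The free group letter ρ_i, for `1 ≤ i ≤ n-1` (junk value `1` otherwise). -/
def fρ (n i : ℕ) : FreeGroup (VBGen n) :=
  if h : 1 ≤ i ∧ i - 1 < n - 1 then FreeGroup.of (Sum.inr ⟨i - 1, h.2⟩) else 1

/-- The defining relators of the virtual braid group `VB n`. -/
def vbRels (n : ℕ) : Set (FreeGroup (VBGen n)) :=
  {r | ∃ i j, 1 ≤ i ∧ i + 2 ≤ j ∧ j ≤ n - 1 ∧
      (r = fσ n i * fσ n j * (fσ n i)⁻¹ * (fσ n j)⁻¹ ∨
       r = fρ n i * fρ n j * (fρ n i)⁻¹ * (fρ n j)⁻¹ ∨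
       r = fσ n i * fρ n j * (fσ n i)⁻¹ * (fρ n j)⁻¹ ∨
       r = fσ n j * fρ n i * (fσ n j)⁻¹ * (fρ n i)⁻¹)} ∪
  {r | ∃ i, 1 ≤ i ∧ i + 1 ≤ n - 1 ∧
      (r = fσ n i * fσ n (i+1) * fσ n i * (fσ n (i+1))⁻¹ * (fσ n i)⁻¹ * (fσ n (i+1))⁻¹ ∨
       r = fρ n i * fρ n (i+1) * fρ n i * (fρ n (i+1))⁻¹ * (fρ n i)⁻¹ * (fρ n (i+1))⁻¹ ∨
       r = fρ n i * fρ n (i+1) * fσ n i * (fρ n (i+1))⁻¹ * (fρ n i)⁻¹ * (fσ n (i+1))⁻¹)} ∪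
  {r | ∃ i, 1 ≤ i ∧ i ≤ n - 1 ∧ r = fρ n i * fρ n i}

/-- The virtual braid group on `n` strands. -/
abbrev VB (n : ℕ) := PresentedGroup (vbRels n)

/-- The generator σ_i of `VB n`. -/
def vσ (n i : ℕ) : VB n := PresentedGroup.mk (vbRels n) (fσ n i)

/-- The generator ρ_i of `VB n`. -/
def vρ (n i : ℕ) : VB n := PresentedGroup.mk (vbRels n) (fρ n i)

/-- a_m = σ_1^m (ρ_1 σ_1 ρ_1 σ_1⁻¹) σ_1^{-m}. -/
def va (n : ℕ) (m : ℤ) : VB n :=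
  (vσ n 1) ^ m * (vρ n 1 * vσ n 1 * vρ n 1 * (vσ n 1)⁻¹) * (vσ n 1) ^ (-m)

/-- b_{m,ε} = σ_1^m (ρ_1^ε σ_2 ρ_1^ε σ_1⁻¹) σ_1^{-m}. -/
def vb (n : ℕ) (m : ℤ) (ε : ℕ) : VB n :=
  (vσ n 1) ^ m * ((vρ n 1) ^ ε * vσ n 2 * (vρ n 1) ^ ε * (vσ n 1)⁻¹) * (vσ n 1) ^ (-m)

/-- c_l = σ_l σ_1⁻¹. -/
def vc (n l : ℕ) : VB n := vσ n l * (vσ n 1)⁻¹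

/-- f_{m,ε} = σ_1^m (ρ_1^ε ρ_2 ρ_1^{ε+1}) σ_1^{-m}; `f_m` is `vf n m 0`. -/
def vf (n : ℕ) (m : ℤ) (ε : ℕ) : VB n :=
  (vσ n 1) ^ m * ((vρ n 1) ^ ε * vρ n 2 * (vρ n 1) ^ (ε + 1)) * (vσ n 1) ^ (-m)

/-- g_{m,l} = σ_1^m (ρ_l ρ_1) σ_1^{-m}. -/
def vg (n : ℕ) (m : ℤ) (l : ℕ) : VB n :=
  (vσ n 1) ^ m * (vρ n l * vρ n 1) * (vσ n 1) ^ (-m)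

/-- The additional relators ρ_i σ_{i+1} σ_i (ρ_{i+1})⁻¹ σ_i⁻¹ σ_{i+1}⁻¹ of the
welded braid group. -/
def wbExtraRels (n : ℕ) : Set (FreeGroup (VBGen n)) :=
  {r | ∃ i, 1 ≤ i ∧ i + 1 ≤ n - 1 ∧
      r = fρ n i * fσ n (i+1) * fσ n i * (fρ n (i+1))⁻¹ * (fσ n i)⁻¹ * (fσ n (i+1))⁻¹}

/-- The defining relators of the welded braid group `WB n`. -/
def wbRels (n : ℕ) : Set (FreeGroup (VBGen n)) := vbRels n ∪ wbExtraRels n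

/-- The welded braid group on `n` strands. -/
abbrev WB (n : ℕ) := PresentedGroup (wbRels n)

/-- The generator σ_i of `WB n`. -/
def wσ (n i : ℕ) : WB n := PresentedGroup.mk (wbRels n) (fσ n i)

/-- The generator ρ_i of `WB n`. -/
def wρ (n i : ℕ) : WB n := PresentedGroup.mk (wbRels n) (fρ n i)

/-- a_m in `WB n`. -/
def wa (n : ℕ) (m : ℤ) : WB n :=
  (wσ n 1) ^ m * (wρ n 1 * wσ n 1 * wρ n 1 * (wσ n 1)⁻¹) * (wσ n 1) ^ (-m)

/-- f_{m,ε} in `WB n`; `f_m` is `wf n m 0`. -/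
def wf (n : ℕ) (m : ℤ) (ε : ℕ) : WB n :=
  (wσ n 1) ^ m * ((wρ n 1) ^ ε * wρ n 2 * (wρ n 1) ^ (ε + 1)) * (wσ n 1) ^ (-m)

/-- c_l in `WB n`. -/
def wc (n l : ℕ) : WB n := wσ n l * (wσ n 1)⁻¹

/-- g_{m,l} in `WB n`. -/
def wg (n : ℕ) (m : ℤ) (l : ℕ) : WB n :=
  (wσ n 1) ^ m * (wρ n l * wρ n 1) * (wσ n 1) ^ (-m)

/-!
Every element in question is conjugate to a product `ρ_i ρ_j` of two virtual generators:
conjugation by `σ_1^m` is an automorphism, and the involution `ρ_1` commutes with `ρ_l` for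
`l ≥ 3`, so it cancels or becomes part of the conjugator. The `ρ_i` satisfy the Coxeter relations
of the symmetric group, hence `ρ_i ρ_j` has order dividing `3` if `|i - j| = 1` and dividing `2`
if `|i - j| ≥ 2`.
-/

section Involutions

variable {G : Type*} [Group G] {a b c : G}

theorem mul_pow_three_eq_one_of_braid (ha : a * a = 1) (hb : b * b = 1)
    (h : a * b * a = b * a * b) : (a * b) ^ 3 = 1 :=
  calc (a * b) ^ 3 = a * (b * a * b) * a * b := by rw [pow_succ, pow_two]; group
    _ = (a * a) * b * (a * a) * b := by rw [← h]; group
    _ = 1 := by rw [ha, one_mul, mul_one, hb]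

theorem mul_pow_two_eq_one_of_commute (ha : a * a = 1) (hb : b * b = 1) (h : Commute a b) :
    (a * b) ^ 2 = 1 := by
  rw [h.mul_pow, pow_two, pow_two, ha, hb, one_mul]

theorem mul_mul_mul_eq_of_commute (hc : c * c = 1) (h : Commute c b) :
    a * c * (b * c) = a * b := by
  rw [← h.eq, mul_assoc, ← mul_assoc c, hc, one_mul]

end Involutions

section VirtualGenerators

variable {n i j : ℕ}

theorem vbRels_mk_eq_one {r : FreeGroup (VBGen n)} (h : r ∈ vbRels n) :
    PresentedGroup.mk (vbRels n) r = 1 :=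
  (QuotientGroup.eq_one_iff r).mpr (Subgroup.subset_normalClosure h)

theorem vρ_mul_self (hi : 1 ≤ i) (hin : i ≤ n - 1) : vρ n i * vρ n i = 1 := by
  have h := vbRels_mk_eq_one (n := n) (Set.mem_union_right _ ⟨i, hi, hin, rfl⟩)
  rwa [map_mul] at h

theorem vρ_inv (hi : 1 ≤ i) (hin : i ≤ n - 1) : (vρ n i)⁻¹ = vρ n i :=
  inv_eq_of_mul_eq_one_right (vρ_mul_self hi hin)

theorem vρ_commute (hi : 1 ≤ i) (hij : i + 2 ≤ j) (hjn : j ≤ n - 1) :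
    Commute (vρ n i) (vρ n j) := by
  have h := vbRels_mk_eq_one (n := n) (Set.mem_union_left _ (Set.mem_union_left _
    ⟨i, j, hi, hij, hjn, Or.inr (Or.inl rfl)⟩))
  simp only [map_mul, map_inv] at h
  exact commutatorElement_eq_one_iff_mul_comm.mp h

theorem vρ_braid (hi : 1 ≤ i) (hin : i + 1 ≤ n - 1) :
    vρ n i * vρ n (i + 1) * vρ n i = vρ n (i + 1) * vρ n i * vρ n (i + 1) := by
  have h := vbRels_mk_eq_one (n := n) (Set.mem_union_left _ (Set.mem_union_right _
    ⟨i, hi, hin, Or.inr (Or.inl rfl)⟩))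
  simp only [map_mul, map_inv] at h
  rwa [mul_inv_eq_one, mul_inv_eq_iff_eq_mul, mul_inv_eq_iff_eq_mul] at h

theorem vρ_mul_vρ_succ_pow_three (hi : 1 ≤ i) (hin : i + 1 ≤ n - 1) :
    (vρ n i * vρ n (i + 1)) ^ 3 = 1 :=
  mul_pow_three_eq_one_of_braid (vρ_mul_self hi (by omega)) (vρ_mul_self (by omega) hin)
    (vρ_braid hi hin)

theorem vρ_succ_mul_vρ_pow_three (hi : 1 ≤ i) (hin : i + 1 ≤ n - 1) :
    (vρ n (i + 1) * vρ n i) ^ 3 = 1 :=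
  mul_pow_three_eq_one_of_braid (vρ_mul_self (by omega) hin) (vρ_mul_self hi (by omega))
    (vρ_braid hi hin).symm

theorem vρ_mul_vρ_pow_two (hi : 1 ≤ i) (hij : i + 2 ≤ j) (hjn : j ≤ n - 1) :
    (vρ n i * vρ n j) ^ 2 = 1 :=
  mul_pow_two_eq_one_of_commute (vρ_mul_self hi (by omega)) (vρ_mul_self (by omega) hjn)
    (vρ_commute hi hij hjn)

end VirtualGenerators

section Conjugates

variable {n : ℕ}

theorem vf_eq_conj (hn : 2 ≤ n) (m : ℤ) (ε : ℕ) :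
    vf n m ε = MulAut.conj (vσ n 1 ^ m * vρ n 1 ^ ε) (vρ n 2 * vρ n 1) := by
  rw [vf, MulAut.conj_apply, mul_inv_rev, ← inv_pow, vρ_inv le_rfl (by omega), zpow_neg,
    pow_succ]
  group

theorem vf_one_eq_inv (hn : 3 ≤ n) (m : ℤ) : vf n m 1 = (vf n m 0)⁻¹ := by
  have h1 : vρ n 1 ^ (1 + 1) = 1 := by rw [pow_two, vρ_mul_self le_rfl (by omega)]
  rw [vf, vf, h1, mul_one, pow_one, pow_zero, one_mul]
  simp only [mul_inv_rev, vρ_inv (n := n) (i := 1) le_rfl (by omega),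
    vρ_inv (n := n) (i := 2) (by omega) (by omega), zpow_neg, inv_inv]
  group

theorem vg_eq_conj (m : ℤ) (l : ℕ) :
    vg n m l = MulAut.conj (vσ n 1 ^ m) (vρ n l * vρ n 1) := by
  rw [vg, MulAut.conj_apply, zpow_neg]

theorem vf_mul_vg_eq_conj {l : ℕ} (hl : 3 ≤ l) (hln : l ≤ n - 1) (m : ℤ) (ε : ℕ) :
    vf n m ε * vg n m l = MulAut.conj (vσ n 1 ^ m * vρ n 1 ^ ε) (vρ n 2 * vρ n l) := by
  have h1l : Commute (vρ n 1) (vρ n l) := vρ_commute le_rfl hl hln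
  have hfix : MulAut.conj (vρ n 1 ^ ε) (vρ n l * vρ n 1) = vρ n l * vρ n 1 :=
    ((h1l.mul_right (Commute.refl _)).pow_left ε).mul_inv_cancel
  rw [vf_eq_conj (by omega), vg_eq_conj, map_mul MulAut.conj, MulAut.mul_apply, ← hfix,
    ← map_mul, ← map_mul, mul_mul_mul_eq_of_commute (vρ_mul_self le_rfl (by omega)) h1l,
    MulAut.mul_apply]

theorem vg_mul_vg_eq_conj {j : ℕ} (hj : 3 ≤ j) (hjn : j ≤ n - 1) (m : ℤ) (i : ℕ) :
    vg n m i * vg n m j = MulAut.conj (vσ n 1 ^ m) (vρ n i * vρ n j) := by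
  rw [vg_eq_conj, vg_eq_conj, ← map_mul, mul_mul_mul_eq_of_commute
    (vρ_mul_self le_rfl (by omega)) (vρ_commute le_rfl hj hjn)]

end Conjugates

/-- torsion relations among the `f_{m,ε}` and `g_{m,l}` in `VB_n`,
`n ≥ 3`. -/
theorem VB_torsion_relations (n : ℕ) (hn : 3 ≤ n) :
    (∀ m : ℤ, vf n m 0 * vf n m 1 = 1) ∧
    (∀ m : ℤ, ∀ ε : ℕ, ε ≤ 1 → (vf n m ε) ^ 3 = 1) ∧
    (4 ≤ n →
      (∀ m : ℤ, ∀ l : ℕ, 3 ≤ l → l ≤ n - 1 → (vg n m l) ^ 2 = 1) ∧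
      (∀ m : ℤ, ∀ ε : ℕ, ε ≤ 1 → (vf n m ε * vg n m 3) ^ 3 = 1) ∧
      (∀ m : ℤ, ∀ ε : ℕ, ε ≤ 1 → ∀ k : ℕ, 4 ≤ k → k ≤ n - 1 →
        (vf n m ε * vg n m k) ^ 2 = 1) ∧
      (∀ m : ℤ, ∀ i : ℕ, 3 ≤ i → i + 1 ≤ n - 1 →
        (vg n m i * vg n m (i+1)) ^ 3 = 1) ∧
      (∀ m : ℤ, ∀ i j : ℕ, 3 ≤ i → i + 1 < j → j ≤ n - 1 →
        (vg n m i * vg n m j) ^ 2 = 1)) := by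
  refine ⟨fun m => ?_, fun m ε _ => ?_, fun _ => ⟨fun m l hl hln => ?_, fun m ε _ => ?_,
    fun m ε _ k hk hkn => ?_, fun m i hi hin => ?_, fun m i j hi hij hjn => ?_⟩⟩
  · rw [vf_one_eq_inv hn, mul_inv_cancel]
  · rw [vf_eq_conj (by omega), ← map_pow,
      vρ_succ_mul_vρ_pow_three (i := 1) le_rfl (by omega), map_one]
  · rw [vg_eq_conj, ← map_pow, ← (vρ_commute le_rfl hl hln).eq,
      vρ_mul_vρ_pow_two le_rfl hl hln, map_one]
  · rw [vf_mul_vg_eq_conj le_rfl (by omega), ← map_pow,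
      vρ_mul_vρ_succ_pow_three (i := 2) (by omega) (by omega), map_one]
  · rw [vf_mul_vg_eq_conj (by omega) hkn, ← map_pow,
      vρ_mul_vρ_pow_two (by omega) (by omega) hkn, map_one]
  · rw [vg_mul_vg_eq_conj (by omega) hin, ← map_pow,
      vρ_mul_vρ_succ_pow_three (by omega) hin, map_one]
  · rw [vg_mul_vg_eq_conj (by omega) hjn, ← map_pow,
      vρ_mul_vρ_pow_two (by omega) (by omega) hjn, map_one]
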